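/- Let 1 ≤ l ≤ n be integers and r ∈ ℚ[x_1,...,x_l] a polynomial such that the monomial x_1···x_l divides r. Let R̃_n and R̃_{n+1} be the polynomials with V_n · R̃_n = ũ_n in ℚ[x_1,...,x_n] and V_{n+1} · R̃_{n+1} = ũ_{n+1} in ℚ[x_1,...,x_{n+1}] (both constructed from the same r). Then R̃_{n+1}(x_1,...,x_n,0) = (n+1−l) · R̃_n(x_1,...,x_n). -/

import Mathlib

open MvPolynomial Finset

/-- The Vandermonde polynomial `V = ∏_{1 ≤ i < j ≤ n} (x_i - x_j)`. -/
noncomputable def vand (n : ℕ) : MvPolynomial (Fin n) ℚ :=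
  ∏ p ∈ Finset.univ.filter (fun p : Fin n × Fin n => p.1 < p.2), (X p.1 - X p.2)

/-- `∏_{1 ≤ i ≤ l, i < j ≤ n} (x_i + x_j)`. -/
noncomputable def prodPlus (n l : ℕ) : MvPolynomial (Fin n) ℚ :=
  ∏ p ∈ Finset.univ.filter (fun p : Fin n × Fin n => (p.1 : ℕ) < l ∧ p.1 < p.2),
    (X p.1 + X p.2)

/-- `∏_{l < i < j ≤ n} (x_i - x_j)`. -/
noncomputable def prodMinus (n l : ℕ) : MvPolynomial (Fin n) ℚ :=
  ∏ p ∈ Finset.univ.filter (fun p : Fin n × Fin n => l ≤ (p.1 : ℕ) ∧ p.1 < p.2),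
    (X p.1 - X p.2)

/-- The signed symmetrization `∑_{ω ∈ S(n)} sgn(ω) · f(x_{ω(1)}, …, x_{ω(n)})`. -/
noncomputable def antiSum (n : ℕ) (f : MvPolynomial (Fin n) ℚ) : MvPolynomial (Fin n) ℚ :=
  ∑ ω : Equiv.Perm (Fin n), ((Equiv.Perm.sign ω : ℤ) : ℚ) • rename (⇑ω) f

/-!
Put `x_{n+1} = 0` in `ũ_{n+1}` and write each `ω ∈ S(n+1)` uniquely as `σ̂ ∘ (k n+1)`, where `σ̂`
extends `σ ∈ S(n)` by fixing `n + 1`; the term of `ω` then sends `x_k` to `0`. For `k ≤ l` it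
vanishes since `x_k ∣ r`. For `k > l` the transposition `(k n+1)` moves only variables beyond `l`,
in which `u_{n+1}` is alternating: the factors `x_i ± x_j` with `i ≤ l` are merely permuted, and
`∏_{l<i<j} (x_i - x_j)` is `V_{n+1}` divided by such factors. So each of the `n + 1 - l` values
`k > l` contributes `x_1 ⋯ x_n · ũ_n`, and as `V_{n+1}(x, 0) = x_1 ⋯ x_n · V_n` the claim follows by
cancellation.
-/

open Equiv.Perm (sign)

section PairProducts

variable {M : Type*} [CommMonoid M]

lemma prod_pairs_lt_castSucc {n : ℕ} (P : Fin (n + 1) → Prop) [DecidablePred P]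
    (F : Fin (n + 1) → Fin (n + 1) → M) :
    ∏ p ∈ univ.filter (fun p : Fin (n + 1) × Fin (n + 1) => P p.1 ∧ p.1 < p.2), F p.1 p.2 =
      (∏ p ∈ univ.filter (fun p : Fin n × Fin n => P p.1.castSucc ∧ p.1 < p.2),
          F p.1.castSucc p.2.castSucc) *
        ∏ i ∈ univ.filter (fun i : Fin n => P i.castSucc), F i.castSucc (Fin.last n) := by
  have hlast : ∀ i : Fin n, ¬ Fin.last n < i.castSucc := fun i =>
    not_lt.mpr (Fin.castSucc_lt_last i).le
  simp only [prod_filter, ← univ_product_univ, prod_product, Fin.prod_univ_castSucc, hlast]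
  simp [← prod_mul_distrib, mul_ite]

lemma prod_pairs_comp_of_forall_lt_fixed {m : ℕ} (l : ℕ) (τ : Equiv.Perm (Fin m))
    (hτ : ∀ i : Fin m, (i : ℕ) < l → τ i = i) (F : Fin m → Fin m → M) :
    ∏ p ∈ univ.filter (fun p : Fin m × Fin m => (p.1 : ℕ) < l ∧ p.1 < p.2), F (τ p.1) (τ p.2) =
      ∏ p ∈ univ.filter (fun p : Fin m × Fin m => (p.1 : ℕ) < l ∧ p.1 < p.2), F p.1 p.2 := by
  have hlow : ∀ j : Fin m, (τ j : ℕ) < l ↔ (j : ℕ) < l := fun j =>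
    ⟨fun h => by rwa [τ.injective (hτ (τ j) h)] at h, fun h => by rwa [hτ j h]⟩
  have hrow : ∀ i j : Fin m, (i : ℕ) < l → (i < τ j ↔ i < j) := by
    intro i j hi
    by_cases hj : (j : ℕ) < l
    · rw [hτ j hj]
    · have := (hlow j).not.mpr hj
      simp only [Fin.lt_def]; omega
  refine prod_equiv ((Equiv.refl _).prodCongr τ) (fun p => ?_) (fun p hp => ?_)
  · simp only [mem_filter, mem_univ, true_and, Equiv.prodCongr_apply, Prod.map, Equiv.refl_apply]
    exact and_congr_right fun hp => (hrow _ _ hp).symm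
  · simp only [mem_filter] at hp
    simp [hτ p.1 hp.2.1]

end PairProducts

lemma vand_eq_neg_one_pow_mul_det (m : ℕ) :
    vand m = (-1) ^ #(univ.filter (fun p : Fin m × Fin m => p.1 < p.2)) *
      (Matrix.vandermonde (X : Fin m → MvPolynomial (Fin m) ℚ)).det := by
  have hdet : (Matrix.vandermonde (X : Fin m → MvPolynomial (Fin m) ℚ)).det =
      ∏ p ∈ univ.filter (fun p : Fin m × Fin m => p.1 < p.2), (X p.2 - X p.1) := by
    rw [Matrix.det_vandermonde, prod_filter, ← univ_product_univ, prod_product]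
    simp only [← prod_filter, filter_lt_eq_Ioi]
  rw [hdet, vand, ← prod_const, ← prod_mul_distrib]
  simp only [neg_one_mul, neg_sub]

lemma rename_vand {m : ℕ} (σ : Equiv.Perm (Fin m)) :
    rename σ (vand m) = ((sign σ : ℤ) : ℚ) • vand m := by
  have hV : (rename σ).mapMatrix (Matrix.vandermonde X) =
      (Matrix.vandermonde (X : Fin m → MvPolynomial (Fin m) ℚ)).submatrix σ id := by
    ext i j; simp [Matrix.vandermonde_apply]
  rw [vand_eq_neg_one_pow_mul_det, map_mul, map_pow, map_neg, map_one, AlgHom.map_det, hV,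
    Matrix.det_permute, Int.cast_smul_eq_zsmul, zsmul_eq_mul]
  ring

lemma vand_eq_prodMinus_zero (m : ℕ) : vand m = prodMinus m 0 := by
  simp [vand, prodMinus]

lemma vand_eq_mul_prodMinus (m l : ℕ) :
    vand m = (∏ p ∈ univ.filter (fun p : Fin m × Fin m => (p.1 : ℕ) < l ∧ p.1 < p.2),
      (X p.1 - X p.2)) * prodMinus m l := by
  rw [vand, prodMinus, ← prod_filter_mul_prod_filter_not _ (fun p : Fin m × Fin m => (p.1 : ℕ) < l),
    filter_filter, filter_filter]
  congr 2 <;> ext <;> simp [and_comm]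

lemma prod_X_sub_X_ne_zero {σ : Type*} (s : Finset (σ × σ)) (hs : ∀ p ∈ s, p.1 ≠ p.2) :
    ∏ p ∈ s, (X p.1 - X p.2 : MvPolynomial σ ℚ) ≠ 0 :=
  prod_ne_zero_iff.mpr fun p hp => sub_ne_zero.mpr (X_injective.ne (hs p hp))

lemma vand_ne_zero (m : ℕ) : vand m ≠ 0 :=
  prod_X_sub_X_ne_zero _ fun _ hp => (mem_filter.mp hp).2.ne

section FixingLow

variable {m l : ℕ} {τ : Equiv.Perm (Fin m)}

lemma rename_prodPlus (hτ : ∀ i : Fin m, (i : ℕ) < l → τ i = i) :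
    rename τ (prodPlus m l) = prodPlus m l := by
  simp only [prodPlus, map_prod, map_add, rename_X]
  exact prod_pairs_comp_of_forall_lt_fixed l τ hτ fun i j => X i + X j

-- `vand m` is `prodMinus m l` times a product whose factors `τ` merely permutes.
lemma rename_prodMinus (hτ : ∀ i : Fin m, (i : ℕ) < l → τ i = i) :
    rename τ (prodMinus m l) = ((sign τ : ℤ) : ℚ) • prodMinus m l := by
  set Q : MvPolynomial (Fin m) ℚ :=
    ∏ p ∈ univ.filter (fun p : Fin m × Fin m => (p.1 : ℕ) < l ∧ p.1 < p.2), (X p.1 - X p.2)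
  have hQ : rename τ Q = Q := by
    simp only [Q, map_prod, map_sub, rename_X]
    exact prod_pairs_comp_of_forall_lt_fixed l τ hτ fun i j => X i - X j
  have hQ0 : Q ≠ 0 := prod_X_sub_X_ne_zero _ fun _ hp => (mem_filter.mp hp).2.2.ne
  refine mul_left_cancel₀ hQ0 ?_
  rw [← hQ, ← map_mul, hQ, ← vand_eq_mul_prodMinus, rename_vand, vand_eq_mul_prodMinus,
    mul_smul_comm]

end FixingLow

section SnocZero

variable {n : ℕ}

lemma aeval_snoc_zero_prodPlus (l : ℕ) :
    aeval (Fin.snoc X (0 : MvPolynomial (Fin n) ℚ)) (prodPlus (n + 1) l) =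
      (∏ i ∈ univ.filter (fun i : Fin n => (i : ℕ) < l), X i) * prodPlus n l := by
  rw [prodPlus, prodPlus, map_prod, prod_pairs_lt_castSucc (fun i => (i : ℕ) < l)
    (fun i j => aeval (Fin.snoc X 0) (X i + X j)), mul_comm]
  simp [Fin.snoc_castSucc]

lemma aeval_snoc_zero_prodMinus (l : ℕ) :
    aeval (Fin.snoc X (0 : MvPolynomial (Fin n) ℚ)) (prodMinus (n + 1) l) =
      (∏ i ∈ univ.filter (fun i : Fin n => l ≤ (i : ℕ)), X i) * prodMinus n l := by
  rw [prodMinus, prodMinus, map_prod, prod_pairs_lt_castSucc (fun i => l ≤ (i : ℕ))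
    (fun i j => aeval (Fin.snoc X 0) (X i - X j)), mul_comm]
  simp [Fin.snoc_castSucc]

lemma aeval_snoc_zero_vand :
    aeval (Fin.snoc X (0 : MvPolynomial (Fin n) ℚ)) (vand (n + 1)) = (∏ i, X i) * vand n := by
  rw [vand_eq_prodMinus_zero, vand_eq_prodMinus_zero, aeval_snoc_zero_prodMinus]
  simp

end SnocZero

-- the paper's `u_m`
noncomputable def uPoly (m l : ℕ) (hlm : l ≤ m) (r : MvPolynomial (Fin l) ℚ) :
    MvPolynomial (Fin m) ℚ :=
  rename (Fin.castLE hlm) r * prodPlus m l * prodMinus m l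

section UPoly

variable {m l : ℕ} (hlm : l ≤ m) (r : MvPolynomial (Fin l) ℚ)

lemma rename_uPoly {τ : Equiv.Perm (Fin m)} (hτ : ∀ i : Fin m, (i : ℕ) < l → τ i = i) :
    rename τ (uPoly m l hlm r) = ((sign τ : ℤ) : ℚ) • uPoly m l hlm r := by
  have hr : rename τ (rename (Fin.castLE hlm) r) = rename (Fin.castLE hlm) r := by
    rw [rename_rename, show ⇑τ ∘ Fin.castLE hlm = Fin.castLE hlm from
      funext fun i => hτ _ i.isLt]
  rw [uPoly, map_mul, map_mul, hr, rename_prodPlus hτ, rename_prodMinus hτ, mul_smul_comm]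

lemma X_dvd_uPoly (hdvd : (∏ i : Fin l, X i) ∣ r) (k : Fin m) (hk : (k : ℕ) < l) :
    X k ∣ uPoly m l hlm r := by
  have hXk : X k = rename (Fin.castLE hlm) (X ⟨k, hk⟩ : MvPolynomial (Fin l) ℚ) := by
    rw [rename_X]; rfl
  rw [hXk, uPoly, mul_assoc]
  exact ((map_dvd _ (dvd_prod_of_mem _ (mem_univ _))).trans (map_dvd _ hdvd)).mul_right _

lemma aeval_snoc_zero_uPoly {n : ℕ} (hln : l ≤ n) :
    aeval (Fin.snoc X (0 : MvPolynomial (Fin n) ℚ)) (uPoly (n + 1) l (hln.trans n.le_succ) r) =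
      (∏ i, X i) * uPoly n l hln r := by
  have hr : aeval (Fin.snoc X (0 : MvPolynomial (Fin n) ℚ))
      (rename (Fin.castLE (hln.trans n.le_succ)) r) = rename (Fin.castLE hln) r := by
    rw [aeval_rename, rename_eq_aeval]
    congr 2
    funext i
    exact Fin.snoc_castSucc (α := fun _ => MvPolynomial (Fin n) ℚ) _ _ (Fin.castLE hln i)
  have hX : (∏ i ∈ univ.filter (fun i : Fin n => (i : ℕ) < l), X i) *
      (∏ i ∈ univ.filter (fun i : Fin n => l ≤ (i : ℕ)), X i) =
      (∏ i, X i : MvPolynomial (Fin n) ℚ) := by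
    rw [← prod_filter_mul_prod_filter_not univ (fun i : Fin n => (i : ℕ) < l)]
    simp only [not_lt]
  rw [uPoly, uPoly, map_mul, map_mul, hr, aeval_snoc_zero_prodPlus, aeval_snoc_zero_prodMinus, ← hX]
  ring

end UPoly

section LiftPerm

variable {n : ℕ}

noncomputable def liftPerm (σ : Equiv.Perm (Fin n)) : Equiv.Perm (Fin (n + 1)) :=
  σ.viaFintypeEmbedding Fin.castSuccEmb

@[simp]
lemma liftPerm_castSucc (σ : Equiv.Perm (Fin n)) (i : Fin n) :
    liftPerm σ i.castSucc = (σ i).castSucc :=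
  Equiv.Perm.viaFintypeEmbedding_apply_image σ Fin.castSuccEmb i

@[simp]
lemma liftPerm_last (σ : Equiv.Perm (Fin n)) : liftPerm σ (Fin.last n) = Fin.last n :=
  Equiv.Perm.viaFintypeEmbedding_apply_notMem_range σ _ fun ⟨a, ha⟩ =>
    (Fin.castSucc_lt_last a).ne ha

@[simp]
lemma sign_liftPerm (σ : Equiv.Perm (Fin n)) : sign (liftPerm σ) = sign σ :=
  Equiv.Perm.viaFintypeEmbedding_sign σ _

lemma liftPerm_injective : Function.Injective (liftPerm (n := n)) := fun σ τ h =>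
  Equiv.ext fun i => Fin.castSucc_injective n (by rw [← liftPerm_castSucc, h, liftPerm_castSucc])

lemma aeval_snoc_zero_rename_liftPerm (σ : Equiv.Perm (Fin n)) (p : MvPolynomial (Fin (n + 1)) ℚ) :
    aeval (Fin.snoc X (0 : MvPolynomial (Fin n) ℚ)) (rename (liftPerm σ) p) =
      rename σ (aeval (Fin.snoc X (0 : MvPolynomial (Fin n) ℚ)) p) := by
  rw [aeval_rename, comp_aeval_apply]
  congr 2
  funext i
  induction i using Fin.lastCases <;> simp

noncomputable def liftMulSwap (x : Fin (n + 1) × Equiv.Perm (Fin n)) : Equiv.Perm (Fin (n + 1)) :=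
  liftPerm x.2 * Equiv.swap x.1 (Fin.last n)

lemma liftMulSwap_apply_fst (x : Fin (n + 1) × Equiv.Perm (Fin n)) :
    liftMulSwap x x.1 = Fin.last n := by
  simp [liftMulSwap]

lemma liftMulSwap_bijective : Function.Bijective (liftMulSwap (n := n)) := by
  refine (Fintype.bijective_iff_injective_and_card _).mpr ⟨?_, ?_⟩
  · rintro ⟨k, σ⟩ ⟨k', σ'⟩ h
    obtain rfl : k = k' := (liftMulSwap (k', σ')).injective <|
      (h ▸ liftMulSwap_apply_fst (k, σ)).trans (liftMulSwap_apply_fst (k', σ')).symm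
    exact Prod.ext rfl (liftPerm_injective (mul_right_cancel h))
  · simp [Fintype.card_perm, Nat.factorial_succ]

end LiftPerm

lemma antiSum_prod_X_mul {n : ℕ} (p : MvPolynomial (Fin n) ℚ) :
    antiSum n ((∏ i, X i) * p) = (∏ i, X i) * antiSum n p := by
  simp only [antiSum, mul_sum, map_mul, map_prod, rename_X, mul_smul_comm]
  exact sum_congr rfl fun ω _ => by rw [Equiv.prod_comp ω X]

theorem aeval_snoc_zero_antiSum {n l : ℕ} (f : MvPolynomial (Fin (n + 1)) ℚ)
    (hsign : ∀ τ : Equiv.Perm (Fin (n + 1)), (∀ i : Fin (n + 1), (i : ℕ) < l → τ i = i) →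
      rename τ f = ((sign τ : ℤ) : ℚ) • f)
    (hdvd : ∀ k : Fin (n + 1), (k : ℕ) < l → X k ∣ f) :
    aeval (Fin.snoc X (0 : MvPolynomial (Fin n) ℚ)) (antiSum (n + 1) f) =
      ((n + 1 - l : ℕ) : ℚ) • antiSum n (aeval (Fin.snoc X (0 : MvPolynomial (Fin n) ℚ)) f) := by
  set φ : Fin (n + 1) → MvPolynomial (Fin n) ℚ := Fin.snoc X 0
  have hterm : ∀ x : Fin (n + 1) × Equiv.Perm (Fin n),
      ((sign (liftMulSwap x) : ℤ) : ℚ) • aeval φ (rename (liftMulSwap x) f) =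
        if (x.1 : ℕ) < l then 0 else ((sign x.2 : ℤ) : ℚ) • rename x.2 (aeval φ f) := by
    rintro ⟨k, σ⟩
    dsimp only
    split_ifs with hk
    · obtain ⟨g, rfl⟩ := hdvd k hk
      simp [φ, map_mul, liftMulSwap_apply_fst (k, σ)]
    · set τ := Equiv.swap k (Fin.last n)
      have hτ : ∀ i : Fin (n + 1), (i : ℕ) < l → τ i = i := fun i hi =>
        Equiv.swap_apply_of_ne_of_ne (by omega) (by simp [Fin.ext_iff]; omega)
      have hsq : ((sign τ : ℤ) : ℚ) * (sign τ : ℤ) = 1 := by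
        rw [← Int.cast_mul, ← Units.val_mul, Int.units_mul_self, Units.val_one, Int.cast_one]
      rw [liftMulSwap, Equiv.Perm.coe_mul, ← rename_rename, hsign τ hτ, map_smul, map_smul,
        aeval_snoc_zero_rename_liftPerm, smul_smul, map_mul, sign_liftPerm]
      congr 1
      push_cast
      linear_combination ((sign σ : ℤ) : ℚ) * hsq
  calc aeval φ (antiSum (n + 1) f)
      = ∑ x, ((sign (liftMulSwap x) : ℤ) : ℚ) • aeval φ (rename (liftMulSwap x) f) := by
        rw [antiSum, map_sum, ← liftMulSwap_bijective.sum_comp]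
        simp only [map_smul]
    _ = ∑ k : Fin (n + 1), if (k : ℕ) < l then 0 else antiSum n (aeval φ f) := by
        simp only [hterm, Fintype.sum_prod_type]
        refine sum_congr rfl fun k _ => ?_
        split_ifs <;> simp [antiSum]
    _ = ((n + 1 - l : ℕ) : ℚ) • antiSum n (aeval φ f) := by
        rw [Fin.sum_univ_eq_sum_range (fun k => if k < l then 0 else antiSum n (aeval φ f)),
          sum_ite, sum_const_zero, zero_add, sum_const, Nat.cast_smul_eq_nsmul]
        congr
        rw [show (range (n + 1)).filter (fun k => ¬ k < l) = Ico l (n + 1) by ext; simp; omega,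
          Nat.card_Ico]

theorem quotient_stability_of_monomial_dvd_general
    (n l : ℕ) (hln : l ≤ n) (r : MvPolynomial (Fin l) ℚ)
    (hdvd : (∏ i : Fin l, X i) ∣ r)
    (Rn : MvPolynomial (Fin n) ℚ) (Rn1 : MvPolynomial (Fin (n + 1)) ℚ)
    (hRn : vand n * Rn =
      antiSum n (rename (Fin.castLE hln) r * prodPlus n l * prodMinus n l))
    (hRn1 : vand (n + 1) * Rn1 =
      antiSum (n + 1) (rename (Fin.castLE (hln.trans (Nat.le_succ n))) r *
        prodPlus (n + 1) l * prodMinus (n + 1) l)) :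
    aeval (Fin.snoc X (0 : MvPolynomial (Fin n) ℚ)) Rn1 = ((n + 1 - l : ℕ) : ℚ) • Rn := by
  have H := congrArg (aeval (Fin.snoc X (0 : MvPolynomial (Fin n) ℚ))) hRn1
  rw [map_mul, aeval_snoc_zero_vand] at H
  change _ = aeval _ (antiSum (n + 1) (uPoly (n + 1) l (hln.trans n.le_succ) r)) at H
  rw [aeval_snoc_zero_antiSum _ (fun _ hτ => rename_uPoly _ r hτ) (X_dvd_uPoly _ r hdvd),
    aeval_snoc_zero_uPoly r hln, antiSum_prod_X_mul, uPoly, ← hRn] at H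
  have hne : (∏ i, X i) * vand n ≠ 0 :=
    mul_ne_zero (prod_ne_zero_iff.mpr fun i _ => X_ne_zero i) (vand_ne_zero n)
  refine mul_left_cancel₀ hne ?_
  rw [H, mul_smul_comm, mul_assoc]

/-- if `x_1 ⋯ x_l` divides `r`, then
`R̃_{n+1}(x_1, …, x_n, 0) = (n + 1 - l) · R̃_n(x_1, …, x_n)`. -/
theorem quotient_stability_of_monomial_dvd
    (n l : ℕ) (hl : 1 ≤ l) (hln : l ≤ n) (r : MvPolynomial (Fin l) ℚ)
    (hdvd : (∏ i : Fin l, X i) ∣ r)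
    (Rn : MvPolynomial (Fin n) ℚ) (Rn1 : MvPolynomial (Fin (n + 1)) ℚ)
    (hRn : vand n * Rn =
      antiSum n (rename (Fin.castLE hln) r * prodPlus n l * prodMinus n l))
    (hRn1 : vand (n + 1) * Rn1 =
      antiSum (n + 1) (rename (Fin.castLE (hln.trans (Nat.le_succ n))) r *
        prodPlus (n + 1) l * prodMinus (n + 1) l)) :
    aeval (Fin.snoc X (0 : MvPolynomial (Fin n) ℚ)) Rn1 = ((n + 1 - l : ℕ) : ℚ) • Rn :=
  quotient_stability_of_monomial_dvd_general n l hln r hdvd Rn Rn1 hRn hRn1
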